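/- arXiv:1710.07216 — 3 statements merged into one kernel-verified Lean document; each statement's English description precedes it below -/
import Mathlib

section
/- Let F ⊆ K be a field extension and let β, α₁, α₂ ∈ K be such that the set {β^u α₁^{q₁} α₂^{q₂} : 0 ≤ u < s, 0 ≤ q₁ < p₁, 0 ≤ q₂ < p₂} is linearly independent over F (where s = s₁·s₂). Let W₁ be a set of p₁ elements, each of the form β^{u₁} α₁^{e₁} for distinct e₁ (or a sum ∑_{u₁=0}^{s₁−1} β^{u₁} α₁^{p₁−1}), and W₂ a set of p₂ elements, each of the form β^{u₂ s₁} α₂^{e₂} for distinct e₂ (or a sum ∑_{u₂=0}^{s₂−1} β^{u₂ s₁} α₂^{p₂−1}). Then the p₁p₂ elements of the product set W₁ ⊙ W₂ = {γ₁γ₂ : γ₁ ∈ W₁, γ₂ ∈ W₂} are linearly independent over F. -/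
/-!
Expanding each product `γ₁γ₂` writes it as a sum of monomials `β^(a + s₁ b) α₁^{e₁} α₂^{e₂}`
from the given independent family, where the exponent pair `(e₁, e₂)` determines the factors
`γ₁, γ₂`. Distinct products therefore use disjoint, nonempty sets of independent monomials, and
sums over such sets are linearly independent.
-/

open Function

theorem LinearIndependent.sum_of_pairwiseDisjoint {ι κ R M : Type*} [Ring R] [AddCommGroup M]
    [Module R M] {v : ι → M} (hv : LinearIndependent R v) {S : κ → Finset ι}
    (hne : ∀ k, (S k).Nonempty) (hdisj : Pairwise (Disjoint on S)) :
    LinearIndependent R fun k => ∑ i ∈ S k, v i := by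
  classical
  have hχ : LinearIndependent R fun k => ∑ i ∈ S k, Finsupp.single i (1 : R) := by
    rw [linearIndependent_iff']
    intro t g hg k hk
    obtain ⟨i, hi⟩ := hne k
    have hχi (k' : κ) : (∑ j ∈ S k', Finsupp.single j (1 : R)) i = if i ∈ S k' then 1 else 0 := by
      simp [Finsupp.finsetSum_apply, Finsupp.single_apply]
    have hgi := congrArg (· i) hg
    simp only [Finsupp.finsetSum_apply, Finsupp.smul_apply, hχi, smul_eq_mul, mul_ite, mul_one,
      mul_zero, Finsupp.coe_zero, Pi.zero_apply] at hgi
    rwa [Finset.sum_eq_single_of_mem k hk fun k' _ hk' => if_neg <|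
      Finset.disjoint_left.mp (hdisj hk'.symm) hi, if_pos hi] at hgi
  convert hχ.map' (Finsupp.linearCombination R v) (LinearMap.ker_eq_bot.mpr hv) using 1
  ext k
  simp [map_sum]

theorem exists_finset_nonempty_eq_sum {M : Type*} [AddCommMonoid M] {n : ℕ} {f : ℕ → M} {x : M}
    (u : Fin n) (hx : x = f u ∨ x = ∑ i ∈ Finset.range n, f i) :
    ∃ A : Finset (Fin n), A.Nonempty ∧ x = ∑ i ∈ A, f i := by
  rcases hx with hx | hx
  · exact ⟨{u}, Finset.singleton_nonempty u, by simpa using hx⟩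
  · exact ⟨Finset.univ, ⟨u, Finset.mem_univ u⟩, by rw [hx, Fin.sum_univ_eq_sum_range]⟩

theorem stmt5_general (F K : Type*) [Field F] [Field K] [Algebra F K]
    (s₁ s₂ s p₁ p₂ : ℕ) (hs : s = s₁ * s₂)
    (β α₁ α₂ : K)
    (hli : LinearIndependent F (fun x : Fin s × Fin p₁ × Fin p₂ =>
      β ^ (x.1 : ℕ) * α₁ ^ (x.2.1 : ℕ) * α₂ ^ (x.2.2 : ℕ)))
    (w₁ : Fin p₁ → K) (w₂ : Fin p₂ → K)
    (e₁ : Fin p₁ → Fin p₁) (he₁ : Function.Injective e₁)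
    (e₂ : Fin p₂ → Fin p₂) (he₂ : Function.Injective e₂)
    (u₁ : Fin p₁ → Fin s₁) (u₂ : Fin p₂ → Fin s₂)
    (hw₁ : ∀ m, w₁ m = β ^ (u₁ m : ℕ) * α₁ ^ (e₁ m : ℕ) ∨
      (w₁ m = ∑ u ∈ Finset.range s₁, β ^ u * α₁ ^ (p₁ - 1) ∧ (e₁ m : ℕ) = p₁ - 1))
    (hw₂ : ∀ m, w₂ m = β ^ ((u₂ m : ℕ) * s₁) * α₂ ^ (e₂ m : ℕ) ∨
      (w₂ m = ∑ u ∈ Finset.range s₂, β ^ (u * s₁) * α₂ ^ (p₂ - 1) ∧ (e₂ m : ℕ) = p₂ - 1)) :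
    LinearIndependent F (fun x : Fin p₁ × Fin p₂ => w₁ x.1 * w₂ x.2) := by
  classical
  subst hs
  choose A₁ hA₁ne hA₁ using fun m => exists_finset_nonempty_eq_sum (u₁ m)
    (f := fun u => β ^ u * α₁ ^ (e₁ m : ℕ)) <| (hw₁ m).imp_right fun ⟨h, he⟩ => he ▸ h
  choose A₂ hA₂ne hA₂ using fun m => exists_finset_nonempty_eq_sum (u₂ m)
    (f := fun u => β ^ (u * s₁) * α₂ ^ (e₂ m : ℕ)) <| (hw₂ m).imp_right fun ⟨h, he⟩ => he ▸ h
  let index : Fin s₁ × Fin s₂ ≃ Fin (s₁ * s₂) :=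
    (Equiv.prodComm _ _).trans (finProdFinEquiv.trans (finCongr (Nat.mul_comm _ _)))
  have hindex (x : Fin s₁ × Fin s₂) : (index x : ℕ) = x.1 + s₁ * x.2 := by simp [index]
  let S (m : Fin p₁ × Fin p₂) := (A₁ m.1 ×ˢ A₂ m.2).map index.toEmbedding ×ˢ {(e₁ m.1, e₂ m.2)}
  have hprod (m : Fin p₁ × Fin p₂) : w₁ m.1 * w₂ m.2 =
      ∑ x ∈ S m, β ^ (x.1 : ℕ) * α₁ ^ (x.2.1 : ℕ) * α₂ ^ (x.2.2 : ℕ) := by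
    rw [Finset.sum_product, Finset.sum_map, Finset.sum_product, hA₁, hA₂, Finset.sum_mul_sum]
    refine Finset.sum_congr rfl fun a _ => Finset.sum_congr rfl fun b _ => ?_
    simp only [Finset.sum_singleton, Equiv.coe_toEmbedding, hindex, pow_add, Nat.mul_comm s₁]
    ring
  have hdisj : Pairwise (Disjoint on S) := fun m m' hm =>
    Finset.disjoint_product.mpr <| .inr <| Finset.disjoint_singleton.mpr fun h =>
      hm (Prod.ext (he₁ (Prod.ext_iff.mp h).1) (he₂ (Prod.ext_iff.mp h).2))
  rw [show (fun m : Fin p₁ × Fin p₂ => w₁ m.1 * w₂ m.2) = _ from funext hprod]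
  exact hli.sum_of_pairwiseDisjoint
    (fun m => ((hA₁ne m.1).product (hA₂ne m.2)).map.product (Finset.singleton_nonempty _)) hdisj

/-- If the monomials `β^u α₁^{q₁} α₂^{q₂}` (`u < s`, `q₁ < p₁`, `q₂ < p₂`) are
linearly independent over `F`, and `W₁`, `W₂` consist of elements of the
prescribed forms, then the `p₁p₂` pairwise products are linearly independent
over `F`. -/
theorem stmt5 (F K : Type*) [Field F] [Field K] [Algebra F K]
    (s₁ s₂ s p₁ p₂ : ℕ) (hs : s = s₁ * s₂)
    (hs₁ : 0 < s₁) (hs₂ : 0 < s₂) (hp₁ : 0 < p₁) (hp₂ : 0 < p₂)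
    (β α₁ α₂ : K)
    (hli : LinearIndependent F (fun x : Fin s × Fin p₁ × Fin p₂ =>
      β ^ (x.1 : ℕ) * α₁ ^ (x.2.1 : ℕ) * α₂ ^ (x.2.2 : ℕ)))
    (w₁ : Fin p₁ → K) (w₂ : Fin p₂ → K)
    (e₁ : Fin p₁ → Fin p₁) (he₁ : Function.Injective e₁)
    (e₂ : Fin p₂ → Fin p₂) (he₂ : Function.Injective e₂)
    (u₁ : Fin p₁ → Fin s₁) (u₂ : Fin p₂ → Fin s₂)
    (hw₁ : ∀ m, w₁ m = β ^ (u₁ m : ℕ) * α₁ ^ (e₁ m : ℕ) ∨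
      (w₁ m = ∑ u ∈ Finset.range s₁, β ^ u * α₁ ^ (p₁ - 1) ∧ (e₁ m : ℕ) = p₁ - 1))
    (hw₂ : ∀ m, w₂ m = β ^ ((u₂ m : ℕ) * s₁) * α₂ ^ (e₂ m : ℕ) ∨
      (w₂ m = ∑ u ∈ Finset.range s₂, β ^ (u * s₁) * α₂ ^ (p₂ - 1) ∧ (e₂ m : ℕ) = p₂ - 1)) :
    LinearIndependent F (fun x : Fin p₁ × Fin p₂ => w₁ x.1 * w₂ x.2) :=
  stmt5_general F K s₁ s₂ s p₁ p₂ hs β α₁ α₂ hli w₁ w₂ e₁ he₁ e₂ he₂ u₁ u₂ hw₁ hw₂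
end

section
/- Let F be a field, K an extension, and let α ∈ K have degree p over F (i.e., [F(α):F] = p). Let β ∈ K generate an extension of F(α) with {1, β, ..., β^{s−1}} linearly independent over F(α), where s = s₁ s₂ and s₁ | (p − 1). Define W := {β^{u} α^{u + q s₁} : 0 ≤ u ≤ s₁−1, 0 ≤ q ≤ (p−1)/s₁ − 1} ∪ {∑_{u=0}^{s₁−1} β^{u} α^{p−1}}. Then span_F(W) + span_F(Wα) + ... + span_F(W α^{s₁−1}) = ⊕_{u=0}^{s₁−1} β^{u} F(α). -/
/-! The inclusion `⊆` is clear. Conversely, because `s₁ ∣ p - 1`, the shifts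
`β^u α^(u + q s₁) · α^j` of the first part of `W` give every `β^u α^e` with `u ≤ e < u + p - 1`.
The missing power `β^u α^(u + p - 1)` is obtained by induction on `u`: it is the `u`-th shift of
the last element of `W` minus the terms `β^v α^(p - 1 + u)`, `v ≠ u`, which come from the
earlier blocks when `v < u` and from the first part when `v > u`. Finally, as `α ≠ 0`, the `p`
consecutive powers `α^u, …, α^(u + p - 1)` span `F(α)` over `F`. -/

open IntermediateField Submodule

section

variable {F K : Type*} [Field F] [Field K] [Algebra F K]

variable (F) in
def shiftSpan (W : Set K) (α : K) (n : ℕ) : Submodule F K :=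
  ⨆ j ∈ Finset.range n, span F ((fun x => x * α ^ j) '' W)

theorem mul_pow_mem_shiftSpan {W : Set K} {α w : K} {n j : ℕ} (hj : j < n) (hw : w ∈ W) :
    w * α ^ j ∈ shiftSpan F W α n :=
  (le_iSup₂ (f := fun j _ => span F ((fun x => x * α ^ j) '' W)) j (Finset.mem_range.2 hj))
    (subset_span ⟨w, hw, rfl⟩)

theorem mul_mem_span_mul_pow_add {α : K} (hint : IsIntegral F α) (h0 : α ≠ 0) (b : K) (t : ℕ)
    {x : K} (hx : x ∈ F⟮α⟯) :
    b * x ∈ span F (Set.range fun i : Fin (minpoly F α).natDegree => b * α ^ (t + i)) := by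
  have hx' : (α ^ t)⁻¹ * x ∈ F⟮α⟯ :=
    mul_mem (inv_mem (pow_mem (mem_adjoin_simple_self F α) t)) hx
  obtain ⟨f, hf⟩ : (α ^ t)⁻¹ * x ∈ (Polynomial.aeval (R := F) α).range := by
    rwa [← Algebra.adjoin_singleton_eq_range_aeval,
      ← adjoin_simple_toSubalgebra_of_isAlgebraic hint.isAlgebraic]
  have hrange : (Set.range fun i : Fin (minpoly F α).natDegree => b * α ^ (t + i)) =
      LinearMap.mulLeft F (b * α ^ t) ''
        Set.range fun i : Fin (minpoly F α).natDegree => α ^ (i : ℕ) := by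
    rw [← Set.range_comp]
    congr 1
    funext i
    simp [pow_add]
  rw [hrange, ← map_span, show b * x = b * α ^ t * ((α ^ t)⁻¹ * x) by field_simp]
  exact mem_map_of_mem (hint.mem_span_pow ⟨f, hf.symm⟩)

def repairSet (α β : K) (p s₁ : ℕ) : Set K :=
  {x | ∃ u < s₁, ∃ q < (p - 1) / s₁, x = β ^ u * α ^ (u + q * s₁)} ∪
    {∑ u ∈ Finset.range s₁, β ^ u * α ^ (p - 1)}

section RepairSet

variable {α β : K} {p s₁ u : ℕ}

theorem pow_mul_pow_add_mem_shiftSpan (hdvd : s₁ ∣ p - 1) (hu : u < s₁) {t : ℕ}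
    (ht : t < p - 1) :
    β ^ u * α ^ (u + t) ∈ shiftSpan F (repairSet α β p s₁) α s₁ := by
  have hq : t / s₁ < (p - 1) / s₁ := Nat.div_lt_div_of_lt_of_dvd hdvd ht
  have hmem : β ^ u * α ^ (u + t / s₁ * s₁) * α ^ (t % s₁) ∈
      shiftSpan F (repairSet α β p s₁) α s₁ :=
    mul_pow_mem_shiftSpan (Nat.mod_lt t (Nat.zero_lt_of_lt hu))
      (Set.mem_union_left _ ⟨u, hu, t / s₁, hq, rfl⟩)
  rwa [mul_assoc, ← pow_add, add_assoc, Nat.div_add_mod'] at hmem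

theorem sum_pow_mul_pow_mem_shiftSpan {j : ℕ} (hj : j < s₁) :
    ∑ u ∈ Finset.range s₁, β ^ u * α ^ (p - 1 + j) ∈ shiftSpan F (repairSet α β p s₁) α s₁ := by
  have hmem : (∑ u ∈ Finset.range s₁, β ^ u * α ^ (p - 1)) * α ^ j ∈
      shiftSpan F (repairSet α β p s₁) α s₁ :=
    mul_pow_mem_shiftSpan hj (Set.mem_union_right _ rfl)
  simpa only [Finset.sum_mul, mul_assoc, ← pow_add] using hmem

theorem pow_mul_pow_sub_one_add_mem_shiftSpan (hdvd : s₁ ∣ p - 1) (hp : 2 ≤ p) (hu : u < s₁)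
    (ih : ∀ v < u, ∀ x ∈ F⟮α⟯, β ^ v * x ∈ shiftSpan F (repairSet α β p s₁) α s₁) :
    β ^ u * α ^ (p - 1 + u) ∈ shiftSpan F (repairSet α β p s₁) α s₁ := by
  have hs₁p : s₁ ≤ p - 1 := Nat.le_of_dvd (by omega) hdvd
  have hothers : ∀ v ∈ (Finset.range s₁).erase u,
      β ^ v * α ^ (p - 1 + u) ∈ shiftSpan F (repairSet α β p s₁) α s₁ := by
    intro v hv
    obtain ⟨hvu, hv⟩ := Finset.mem_erase.1 hv
    rw [Finset.mem_range] at hv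
    rcases Nat.lt_or_gt_of_ne hvu with hlt | hgt
    · exact ih v hlt _ (pow_mem (mem_adjoin_simple_self F α) _)
    · rw [show p - 1 + u = v + (p - 1 + u - v) by omega]
      exact pow_mul_pow_add_mem_shiftSpan hdvd hv (by omega)
  convert sub_mem (sum_pow_mul_pow_mem_shiftSpan hu) (sum_mem hothers) using 1
  rw [← Finset.add_sum_erase _ _ (Finset.mem_range.2 hu), add_sub_cancel_right]

theorem pow_mul_mem_shiftSpan (hint : IsIntegral F α) (hdeg : (minpoly F α).natDegree = p)
    (hp : 2 ≤ p) (hdvd : s₁ ∣ p - 1) (hu : u < s₁) {x : K} (hx : x ∈ F⟮α⟯) :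
    β ^ u * x ∈ shiftSpan F (repairSet α β p s₁) α s₁ := by
  have h0 : α ≠ 0 := by
    rintro rfl
    rw [minpoly.zero, Polynomial.natDegree_X] at hdeg
    omega
  induction u using Nat.strong_induction_on generalizing x with
  | _ u ih =>
  have hpow : ∀ i < p, β ^ u * α ^ (u + i) ∈ shiftSpan F (repairSet α β p s₁) α s₁ := by
    intro i hi
    rcases Nat.lt_or_ge i (p - 1) with hlt | hge
    · exact pow_mul_pow_add_mem_shiftSpan hdvd hu hlt
    · rw [show u + i = p - 1 + u by omega]
      exact pow_mul_pow_sub_one_add_mem_shiftSpan hdvd hp hu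
        fun v hv x hx => ih v hv (hv.trans hu) hx
  refine span_le.2 ?_ (mul_mem_span_mul_pow_add hint h0 (β ^ u) u hx)
  rintro _ ⟨i, rfl⟩
  exact hpow i (hdeg ▸ i.2)

theorem shiftSpan_repairSet_le :
    shiftSpan F (repairSet α β p s₁) α s₁ ≤
      ⨆ u ∈ Finset.range s₁, span F ((fun c => β ^ u * c) '' (F⟮α⟯ : Set K)) := by
  have hblock : ∀ u < s₁, ∀ x ∈ F⟮α⟯,
      β ^ u * x ∈ ⨆ u ∈ Finset.range s₁, span F ((fun c => β ^ u * c) '' (F⟮α⟯ : Set K)) :=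
    fun u hu x hx =>
      (le_iSup₂ (f := fun u _ => span F ((fun c => β ^ u * c) '' (F⟮α⟯ : Set K))) u
        (Finset.mem_range.2 hu)) (subset_span ⟨x, hx, rfl⟩)
  have hαpow : ∀ n, α ^ n ∈ F⟮α⟯ := fun n => pow_mem (mem_adjoin_simple_self F α) n
  refine iSup₂_le fun j _ => span_le.2 ?_
  rintro _ ⟨w, hw | rfl, rfl⟩ <;> dsimp only
  · obtain ⟨u, hu, q, -, rfl⟩ := hw
    rw [mul_assoc]
    exact hblock u hu _ (mul_mem (hαpow _) (hαpow _))
  · rw [Finset.sum_mul]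
    refine sum_mem fun u hu => ?_
    rw [mul_assoc]
    exact hblock u (Finset.mem_range.1 hu) _ (mul_mem (hαpow _) (hαpow _))

end RepairSet

end

theorem stmt11_general (F K : Type*) [Field F] [Field K] [Algebra F K]
    (p s₁ : ℕ) (hp : p.Prime)
    (hdvd : s₁ ∣ p - 1)
    (α β : K)
    (hα : Module.finrank F (IntermediateField.adjoin F {α}) = p)
    (W : Set K)
    (hW : W = {x | ∃ u < s₁, ∃ q < (p - 1) / s₁, x = β ^ u * α ^ (u + q * s₁)} ∪
        {∑ u ∈ Finset.range s₁, β ^ u * α ^ (p - 1)}) :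
    (⨆ j ∈ Finset.range s₁, Submodule.span F ((fun x => x * α ^ j) '' W)) =
      ⨆ u ∈ Finset.range s₁, Submodule.span F
        ((fun c => β ^ u * c) '' (IntermediateField.adjoin F {α} : Set K)) := by
  have : FiniteDimensional F F⟮α⟯ := Module.finite_of_finrank_pos (hα ▸ hp.pos)
  have hint : IsIntegral F α :=
    isIntegral_iff.1 (IsIntegral.of_finite F (AdjoinSimple.gen F α))
  have hdeg : (minpoly F α).natDegree = p := (adjoin.finrank hint).symm.trans hα
  subst hW
  refine le_antisymm shiftSpan_repairSet_le (iSup₂_le fun u hu => span_le.2 ?_)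
  rintro _ ⟨x, hx, rfl⟩
  exact pow_mul_mem_shiftSpan hint hdeg hp.two_le hdvd (Finset.mem_range.1 hu) hx

/-- Proposition: `span_F(W) + span_F(Wα) + ⋯ + span_F(Wα^{s₁−1})
= ⊕_{u<s₁} β^u F(α)`, where `W` is as in the repair construction. -/
theorem stmt11 (F K : Type*) [Field F] [Field K] [Algebra F K]
    (p s₁ s₂ s : ℕ) (hp : p.Prime) (hs₁ : 0 < s₁) (hs₂ : 0 < s₂)
    (hs : s = s₁ * s₂) (hdvd : s₁ ∣ p - 1)
    (α β : K)
    (hα : Module.finrank F (IntermediateField.adjoin F {α}) = p)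
    (hβ : LinearIndependent (IntermediateField.adjoin F {α})
      (fun u : Fin s => β ^ (u : ℕ)))
    (W : Set K)
    (hW : W = {x | ∃ u < s₁, ∃ q < (p - 1) / s₁, x = β ^ u * α ^ (u + q * s₁)} ∪
        {∑ u ∈ Finset.range s₁, β ^ u * α ^ (p - 1)}) :
    (⨆ j ∈ Finset.range s₁, Submodule.span F ((fun x => x * α ^ j) '' W)) =
      ⨆ u ∈ Finset.range s₁, Submodule.span F
        ((fun c => β ^ u * c) '' (IntermediateField.adjoin F {α} : Set K)) :=
  stmt11_general F K p s₁ hp hdvd α β hα W hW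
end

section
/- With notation as in the two-erasure repair construction (s₁ = d+1−k, s₂ = d+2−k, s = s₁s₂, α_{i₁}, α_{i₂} of coprime prime degrees p_{i₁}, p_{i₂} over F, and β of degree s over F(α_{i₁}, α_{i₂})), the subspaces span_F(S_{i₁}) and span_F(S_{i₂}) satisfy dim_F(span_F(S_{i₁}) ∩ span_F(S_{i₂})) = p_{i₁} p_{i₂}, where S_{i₁} = ∪_{u₂, q₂} β^{u₂ s₁} α_{i₂}^{q₂} W_{i₁} and S_{i₂} = ∪_{u₁, q₁} β^{u₁} α_{i₁}^{q₁} W_{i₂}, with W_{i₁}, W_{i₂} defined as in the construction. -/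
/-!
Order the monomial basis as `β ^ (u₁ + s₁ u₂) α₁ ^ q₁ α₂ ^ q₂` with `u₁ < s₁`, `u₂ < s₂`. For each
exponent pair `j = (q₁, q₂)` the `s₁ s₂` monomials with `α`-exponents `j` span a copy of
`F ^ s₁ ⊗ F ^ s₂`, and both spans split along these `p₁ p₂` blocks: in block `j`, `span S₁` is
`x ⊗ F ^ s₂` and `span S₂` is `F ^ s₁ ⊗ y`, where `x` is the indicator of `q₁ % s₁` (the all-ones
vector if `q₁ = p₁ - 1`) and `y` that of `q₂ % s₂` (the all-ones vector if `q₂ = p₂ - 1`). Since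
`x, y ≠ 0`, the intersection in each block is the line `x ⊗ y`, so the intersection has
dimension `p₁ p₂`. Because `s₁ ∣ p₁ - 1`, the monomials in `W₁` reach every exponent
`q₁ < p₁ - 1`, and likewise for `W₂`.
-/

open Finset Submodule

noncomputable section

namespace Module.Basis

/- Through `b`, `V` is `⨁ j : J, F ^ ι₁ ⊗ F ^ ι₂`: `pureLeft x (v₂, j)` is `x j ⊗ e v₂` and
`pureRight y (v₁, j)` is `e v₁ ⊗ y j` in the `j`-th summand, `pureMap x y c` is
`∑ j, c j • x j ⊗ y j`, and `proportionalLeft x` consists of the vectors whose `j`-th component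
is of the form `x j ⊗ w` for every `j`. -/

variable {F V ι₁ ι₂ J : Type*} [Field F] [AddCommGroup V] [Module F V]
  (b : Basis (ι₁ × ι₂ × J) F V) (x : J → ι₁ → F) (y : J → ι₂ → F)

def proportionalLeft : Submodule F V :=
  ⨅ (j) (v₂) (v₁) (v₁'),
    LinearMap.ker (x j v₁' • b.coord (v₁, v₂, j) - x j v₁ • b.coord (v₁', v₂, j))

def proportionalRight : Submodule F V :=
  ⨅ (j) (v₁) (v₂) (v₂'),
    LinearMap.ker (y j v₂' • b.coord (v₁, v₂, j) - y j v₂ • b.coord (v₁, v₂', j))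

variable {b x y} in
theorem mem_proportionalLeft {f : V} : f ∈ b.proportionalLeft x ↔
    ∀ j v₂ v₁ v₁', x j v₁' * b.repr f (v₁, v₂, j) = x j v₁ * b.repr f (v₁', v₂, j) := by
  simp [proportionalLeft, sub_eq_zero]

variable {b x y} in
theorem mem_proportionalRight {f : V} : f ∈ b.proportionalRight y ↔
    ∀ j v₁ v₂ v₂', y j v₂' * b.repr f (v₁, v₂, j) = y j v₂ * b.repr f (v₁, v₂', j) := by
  simp [proportionalRight, sub_eq_zero]

section Left

variable [Fintype ι₁]

def pureLeft (p : ι₂ × J) : V := ∑ v, x p.2 v • b (v, p.1, p.2)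

theorem repr_pureLeft [DecidableEq ι₂] [DecidableEq J] (p : ι₂ × J) (i : ι₁ × ι₂ × J) :
    b.repr (b.pureLeft x p) i = if i.2 = p then x p.2 i.1 else 0 := by
  classical
  obtain ⟨w₁, w₂, j'⟩ := i
  obtain ⟨v₂, j⟩ := p
  simp only [pureLeft, map_sum, Finsupp.finsetSum_apply, map_smul, repr_self, Finsupp.smul_apply,
    Finsupp.single_apply, smul_eq_mul, Prod.mk.injEq, mul_ite, mul_one, mul_zero]
  split_ifs with h
  · obtain ⟨rfl, rfl⟩ := h
    simp
  · refine Finset.sum_eq_zero fun v _ => if_neg ?_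
    rintro ⟨-, rfl, rfl⟩
    exact h ⟨rfl, rfl⟩

theorem pureLeft_mem_proportionalLeft (p : ι₂ × J) : b.pureLeft x p ∈ b.proportionalLeft x := by
  classical
  obtain ⟨u₂, j₀⟩ := p
  rw [mem_proportionalLeft]
  intro j v₂ v₁ v₁'
  simp only [repr_pureLeft]
  split_ifs with h
  · obtain ⟨rfl, rfl⟩ := Prod.ext_iff.mp h
    ring
  · ring

end Left

section Right

variable [Fintype ι₂]

def pureRight (p : ι₁ × J) : V := ∑ v, y p.2 v • b (p.1, v, p.2)

theorem repr_pureRight [DecidableEq ι₁] [DecidableEq J] (p : ι₁ × J) (i : ι₁ × ι₂ × J) :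
    b.repr (b.pureRight y p) i = if (i.1, i.2.2) = p then y p.2 i.2.1 else 0 := by
  classical
  obtain ⟨w₁, w₂, j'⟩ := i
  obtain ⟨v₁, j⟩ := p
  simp only [pureRight, map_sum, Finsupp.finsetSum_apply, map_smul, repr_self, Finsupp.smul_apply,
    Finsupp.single_apply, smul_eq_mul, Prod.mk.injEq, mul_ite, mul_one, mul_zero]
  split_ifs with h
  · obtain ⟨rfl, rfl⟩ := h
    simp
  · refine Finset.sum_eq_zero fun v _ => if_neg ?_
    rintro ⟨rfl, -, rfl⟩
    exact h ⟨rfl, rfl⟩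

theorem pureRight_mem_proportionalRight (p : ι₁ × J) :
    b.pureRight y p ∈ b.proportionalRight y := by
  classical
  obtain ⟨u₁, j₀⟩ := p
  rw [mem_proportionalRight]
  intro j v₁ v₂ v₂'
  simp only [repr_pureRight]
  split_ifs with h
  · obtain ⟨rfl, rfl⟩ := Prod.ext_iff.mp h
    ring
  · ring

end Right

variable [Fintype ι₁] [Fintype ι₂] [Fintype J]

def pureMap : (J → F) →ₗ[F] V :=
  b.equivFun.symm.toLinearMap ∘ₗ
    LinearMap.pi fun i => (x i.2.2 i.1 * y i.2.2 i.2.1) • LinearMap.proj i.2.2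

theorem repr_pureMap (c : J → F) (i : ι₁ × ι₂ × J) :
    b.repr (b.pureMap x y c) i = x i.2.2 i.1 * y i.2.2 i.2.1 * c i.2.2 := by
  rw [pureMap, LinearMap.comp_apply, LinearEquiv.coe_coe, equivFun_symm_apply, repr_sum_self]
  rfl

theorem pureMap_eq_sum_pureLeft (c : J → F) :
    b.pureMap x y c = ∑ p : ι₂ × J, (y p.2 p.1 * c p.2) • b.pureLeft x p := by
  classical
  refine b.ext_elem_iff.mpr fun i => ?_
  simp only [repr_pureMap, map_sum, map_smul, Finsupp.finsetSum_apply, Finsupp.smul_apply,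
    smul_eq_mul, repr_pureLeft, mul_ite, mul_zero, Finset.sum_ite_eq, Finset.mem_univ, if_true]
  ring

theorem pureMap_eq_sum_pureRight (c : J → F) :
    b.pureMap x y c = ∑ p : ι₁ × J, (x p.2 p.1 * c p.2) • b.pureRight y p := by
  classical
  refine b.ext_elem_iff.mpr fun i => ?_
  simp only [repr_pureMap, map_sum, map_smul, Finsupp.finsetSum_apply, Finsupp.smul_apply,
    smul_eq_mul, repr_pureRight, mul_ite, mul_zero, Finset.sum_ite_eq, Finset.mem_univ, if_true]
  ring

variable {b x y}

theorem pureMap_injective (hx : ∀ j, x j ≠ 0) (hy : ∀ j, y j ≠ 0) :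
    Function.Injective (b.pureMap x y) := by
  refine (injective_iff_map_eq_zero _).mpr fun c hc => funext fun j => ?_
  obtain ⟨v₁, hv₁⟩ : ∃ v, x j v ≠ 0 := Function.ne_iff.mp (hx j)
  obtain ⟨v₂, hv₂⟩ : ∃ v, y j v ≠ 0 := Function.ne_iff.mp (hy j)
  have hcoord := congrArg (fun f => b.repr f (v₁, v₂, j)) hc
  simp only [repr_pureMap, map_zero, Finsupp.zero_apply] at hcoord
  simpa [hv₁, hv₂] using hcoord

theorem proportionalLeft_inf_proportionalRight_le_range (hx : ∀ j, x j ≠ 0)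
    (hy : ∀ j, y j ≠ 0) :
    b.proportionalLeft x ⊓ b.proportionalRight y ≤ LinearMap.range (b.pureMap x y) := by
  rintro f ⟨hl, hr⟩
  rw [SetLike.mem_coe, mem_proportionalLeft] at hl
  rw [SetLike.mem_coe, mem_proportionalRight] at hr
  choose v₁ hv₁ using fun j => (Function.ne_iff.mp (hx j) : ∃ v, x j v ≠ 0)
  choose v₂ hv₂ using fun j => (Function.ne_iff.mp (hy j) : ∃ v, y j v ≠ 0)
  refine ⟨fun j => b.repr f (v₁ j, v₂ j, j) / (x j (v₁ j) * y j (v₂ j)),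
    b.ext_elem_iff.mpr fun ⟨w₁, w₂, j⟩ => ?_⟩
  have h1 := hl j w₂ w₁ (v₁ j)
  have h2 := hr j (v₁ j) w₂ (v₂ j)
  have hx₁ := hv₁ j
  have hy₂ := hv₂ j
  rw [repr_pureMap]
  field_simp
  linear_combination (-y j (v₂ j)) * h1 - x j w₁ * h2

theorem span_pureLeft_inf_span_pureRight (hx : ∀ j, x j ≠ 0) (hy : ∀ j, y j ≠ 0) :
    span F (Set.range (b.pureLeft x)) ⊓ span F (Set.range (b.pureRight y)) =
      LinearMap.range (b.pureMap x y) := by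
  refine le_antisymm ((inf_le_inf (span_le.mpr ?_) (span_le.mpr ?_)).trans
    (proportionalLeft_inf_proportionalRight_le_range hx hy)) ?_
  · rintro _ ⟨p, rfl⟩
    exact b.pureLeft_mem_proportionalLeft x p
  · rintro _ ⟨p, rfl⟩
    exact b.pureRight_mem_proportionalRight y p
  · rintro _ ⟨c, rfl⟩
    refine ⟨?_, ?_⟩
    · rw [pureMap_eq_sum_pureLeft]
      exact sum_mem fun p _ => smul_mem _ _ (subset_span ⟨p, rfl⟩)
    · rw [pureMap_eq_sum_pureRight]
      exact sum_mem fun p _ => smul_mem _ _ (subset_span ⟨p, rfl⟩)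

theorem finrank_span_pureLeft_inf_span_pureRight (hx : ∀ j, x j ≠ 0) (hy : ∀ j, y j ≠ 0) :
    finrank F ↥(span F (Set.range (b.pureLeft x)) ⊓ span F (Set.range (b.pureRight y))) =
      Fintype.card J := by
  rw [span_pureLeft_inf_span_pureRight hx hy,
    LinearMap.finrank_range_of_inj (pureMap_injective hx hy), Module.finrank_fintype_fun_eq_card]

end Module.Basis

section ErasureWeight

def erasureWeight (R : Type*) [Semiring R] (s p q : ℕ) (v : Fin s) : R :=
  if q = p - 1 ∨ q % s = v then 1 else 0

variable {R : Type*} [Semiring R] {s p q : ℕ}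

theorem erasureWeight_ne_zero [Nontrivial R] (hs : 0 < s) : erasureWeight R s p q ≠ 0 :=
  Function.ne_iff.mpr ⟨⟨q % s, Nat.mod_lt _ hs⟩, by simp [erasureWeight]⟩

variable {M : Type*} [AddCommMonoid M] [Module R M]

theorem sum_erasureWeight_smul_of_eq (h : q = p - 1) (f : Fin s → M) :
    ∑ v, erasureWeight R s p q v • f v = ∑ v, f v := by
  simp [erasureWeight, h]

theorem sum_erasureWeight_smul_of_ne (hs : 0 < s) (h : q ≠ p - 1) (f : Fin s → M) :
    ∑ v, erasureWeight R s p q v • f v = f ⟨q % s, Nat.mod_lt _ hs⟩ := by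
  rw [Finset.sum_eq_single_of_mem ⟨q % s, Nat.mod_lt _ hs⟩ (mem_univ _)]
  · simp [erasureWeight]
  · intro v _ hv
    rw [erasureWeight, if_neg, zero_smul]
    rintro (h' | h')
    · exact h h'
    · exact hv (Fin.ext h'.symm)

end ErasureWeight

section GridBasis

variable {R M J : Type*} [Semiring R] [AddCommMonoid M] [Module R M] {s₁ s₂ : ℕ}

def gridBasis (b : Module.Basis (Fin (s₂ * s₁) × J) R M) :
    Module.Basis (Fin s₁ × Fin s₂ × J) R M :=
  b.reindex (((finProdFinEquiv.symm.trans (Equiv.prodComm _ _)).prodCongr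
    (Equiv.refl J)).trans (Equiv.prodAssoc _ _ _))

theorem gridBasis_apply (b : Module.Basis (Fin (s₂ * s₁) × J) R M) (u₁ : Fin s₁) (u₂ : Fin s₂)
    (j : J) : gridBasis b (u₁, u₂, j) = b (finProdFinEquiv (u₂, u₁), j) := by
  simp [gridBasis]

end GridBasis

theorem add_mul_lt_of_lt_of_lt_div {u q s n : ℕ} (hu : u < s) (hq : q < n / s) :
    u + q * s < n :=
  calc u + q * s < (q + 1) * s := by rw [add_mul, one_mul, add_comm]; omega
    _ ≤ n := (Nat.le_div_iff_mul_le (by omega)).mp hq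

section TwoErasure

variable {F K : Type*} [Field F] [Field K] [Algebra F K] {s₁ s₂ p₁ p₂ : ℕ} {β α₁ α₂ : K}
  {b : Module.Basis (Fin (s₂ * s₁) × Fin p₁ × Fin p₂) F K}

theorem gridBasis_apply_eq_monomial
    (hb : ∀ x, b x = β ^ (x.1 : ℕ) * α₁ ^ (x.2.1 : ℕ) * α₂ ^ (x.2.2 : ℕ))
    (u₁ : Fin s₁) (u₂ : Fin s₂) (q₁ : Fin p₁) (q₂ : Fin p₂) :
    gridBasis b (u₁, u₂, q₁, q₂) = β ^ (u₁ + s₁ * u₂ : ℕ) * α₁ ^ (q₁ : ℕ) * α₂ ^ (q₂ : ℕ) := by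
  rw [gridBasis_apply, hb, finProdFinEquiv_apply_val]

theorem pureLeft_erasureWeight_of_eq
    (hb : ∀ x, b x = β ^ (x.1 : ℕ) * α₁ ^ (x.2.1 : ℕ) * α₂ ^ (x.2.2 : ℕ))
    (u₂ : Fin s₂) (q₁ : Fin p₁) (q₂ : Fin p₂) (h : (q₁ : ℕ) = p₁ - 1) :
    (gridBasis b).pureLeft (fun j => erasureWeight F s₁ p₁ j.1) (u₂, q₁, q₂) =
      β ^ (u₂ * s₁ : ℕ) * α₂ ^ (q₂ : ℕ) * (α₁ ^ (p₁ - 1) * ∑ u ∈ range s₁, β ^ u) := by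
  rw [Module.Basis.pureLeft, sum_erasureWeight_smul_of_eq h, ← Fin.sum_univ_eq_sum_range,
    mul_sum, mul_sum]
  refine sum_congr rfl fun v _ => ?_
  rw [gridBasis_apply_eq_monomial hb, h]
  ring

theorem pureLeft_erasureWeight_of_ne
    (hb : ∀ x, b x = β ^ (x.1 : ℕ) * α₁ ^ (x.2.1 : ℕ) * α₂ ^ (x.2.2 : ℕ))
    (hs₁ : 0 < s₁) (u₂ : Fin s₂) (q₁ : Fin p₁) (q₂ : Fin p₂)
    (h : (q₁ : ℕ) ≠ p₁ - 1) :
    (gridBasis b).pureLeft (fun j => erasureWeight F s₁ p₁ j.1) (u₂, q₁, q₂) =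
      β ^ (u₂ * s₁ : ℕ) * α₂ ^ (q₂ : ℕ) * (β ^ (q₁ % s₁ : ℕ) * α₁ ^ (q₁ : ℕ)) := by
  rw [Module.Basis.pureLeft, sum_erasureWeight_smul_of_ne hs₁ h, gridBasis_apply_eq_monomial hb]
  ring

theorem pureRight_erasureWeight_of_eq
    (hb : ∀ x, b x = β ^ (x.1 : ℕ) * α₁ ^ (x.2.1 : ℕ) * α₂ ^ (x.2.2 : ℕ))
    (u₁ : Fin s₁) (q₁ : Fin p₁) (q₂ : Fin p₂) (h : (q₂ : ℕ) = p₂ - 1) :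
    (gridBasis b).pureRight (fun j => erasureWeight F s₂ p₂ j.2) (u₁, q₁, q₂) =
      β ^ (u₁ : ℕ) * α₁ ^ (q₁ : ℕ) * (α₂ ^ (p₂ - 1) * ∑ u ∈ range s₂, β ^ (u * s₁)) := by
  rw [Module.Basis.pureRight, sum_erasureWeight_smul_of_eq h,
    ← Fin.sum_univ_eq_sum_range (fun u => β ^ (u * s₁)), mul_sum, mul_sum]
  refine sum_congr rfl fun v _ => ?_
  rw [gridBasis_apply_eq_monomial hb, h]
  ring

theorem pureRight_erasureWeight_of_ne
    (hb : ∀ x, b x = β ^ (x.1 : ℕ) * α₁ ^ (x.2.1 : ℕ) * α₂ ^ (x.2.2 : ℕ))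
    (hs₂ : 0 < s₂) (u₁ : Fin s₁) (q₁ : Fin p₁) (q₂ : Fin p₂)
    (h : (q₂ : ℕ) ≠ p₂ - 1) :
    (gridBasis b).pureRight (fun j => erasureWeight F s₂ p₂ j.2) (u₁, q₁, q₂) =
      β ^ (u₁ : ℕ) * α₁ ^ (q₁ : ℕ) * (β ^ (q₂ % s₂ * s₁ : ℕ) * α₂ ^ (q₂ : ℕ)) := by
  rw [Module.Basis.pureRight, sum_erasureWeight_smul_of_ne hs₂ h, gridBasis_apply_eq_monomial hb]
  ring

theorem eq_range_pureLeft_erasureWeight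
    (hb : ∀ x, b x = β ^ (x.1 : ℕ) * α₁ ^ (x.2.1 : ℕ) * α₂ ^ (x.2.2 : ℕ))
    (hs₁ : 0 < s₁) (hp₁ : 0 < p₁) (hd₁ : s₁ ∣ p₁ - 1) {W₁ S₁ : Set K}
    (hW₁ : W₁ = {x | ∃ u < s₁, ∃ q < (p₁ - 1) / s₁, x = β ^ u * α₁ ^ (u + q * s₁)} ∪
        {α₁ ^ (p₁ - 1) * ∑ u ∈ Finset.range s₁, β ^ u})
    (hS₁ : S₁ = {x | ∃ u₂ < s₂, ∃ q₂ < p₂, ∃ w ∈ W₁, x = β ^ (u₂ * s₁) * α₂ ^ q₂ * w}) :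
    S₁ = Set.range ((gridBasis b).pureLeft fun j => erasureWeight F s₁ p₁ j.1) := by
  subst hW₁ hS₁
  ext z
  constructor
  · rintro ⟨u₂, hu₂, q₂, hq₂, w, hw | hw, rfl⟩
    · obtain ⟨u, hu, q, hq, rfl⟩ := hw
      have hq₁ := add_mul_lt_of_lt_of_lt_div hu hq
      refine ⟨(⟨u₂, hu₂⟩, ⟨u + q * s₁, by omega⟩, ⟨q₂, hq₂⟩), ?_⟩
      rw [pureLeft_erasureWeight_of_ne hb hs₁ _ _ _ hq₁.ne]
      simp [Nat.add_mul_mod_self_right, Nat.mod_eq_of_lt hu]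
    · rw [Set.mem_singleton_iff] at hw
      subst hw
      exact ⟨(⟨u₂, hu₂⟩, ⟨p₁ - 1, by omega⟩, ⟨q₂, hq₂⟩),
        pureLeft_erasureWeight_of_eq hb _ _ _ rfl⟩
  · rintro ⟨⟨u₂, q₁, q₂⟩, rfl⟩
    refine ⟨u₂, u₂.isLt, q₂, q₂.isLt, ?_⟩
    by_cases h : (q₁ : ℕ) = p₁ - 1
    · exact ⟨_, Or.inr rfl, pureLeft_erasureWeight_of_eq hb u₂ q₁ q₂ h⟩
    · refine ⟨_, Or.inl ⟨q₁ % s₁, Nat.mod_lt _ hs₁, q₁ / s₁,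
        Nat.div_lt_div_of_lt_of_dvd hd₁ (by omega), ?_⟩,
        pureLeft_erasureWeight_of_ne hb hs₁ u₂ q₁ q₂ h⟩
      rw [Nat.mod_add_div']

theorem eq_range_pureRight_erasureWeight
    (hb : ∀ x, b x = β ^ (x.1 : ℕ) * α₁ ^ (x.2.1 : ℕ) * α₂ ^ (x.2.2 : ℕ))
    (hs₂ : 0 < s₂) (hp₂ : 0 < p₂) (hd₂ : s₂ ∣ p₂ - 1) {W₂ S₂ : Set K}
    (hW₂ : W₂ = {x | ∃ u < s₂, ∃ q < (p₂ - 1) / s₂, x = β ^ (u * s₁) * α₂ ^ (u + q * s₂)} ∪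
        {α₂ ^ (p₂ - 1) * ∑ u ∈ Finset.range s₂, β ^ (u * s₁)})
    (hS₂ : S₂ = {x | ∃ u₁ < s₁, ∃ q₁ < p₁, ∃ w ∈ W₂, x = β ^ u₁ * α₁ ^ q₁ * w}) :
    S₂ = Set.range ((gridBasis b).pureRight fun j => erasureWeight F s₂ p₂ j.2) := by
  subst hW₂ hS₂
  ext z
  constructor
  · rintro ⟨u₁, hu₁, q₁, hq₁, w, hw | hw, rfl⟩
    · obtain ⟨u, hu, q, hq, rfl⟩ := hw
      have hq₂ := add_mul_lt_of_lt_of_lt_div hu hq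
      refine ⟨(⟨u₁, hu₁⟩, ⟨q₁, hq₁⟩, ⟨u + q * s₂, by omega⟩), ?_⟩
      rw [pureRight_erasureWeight_of_ne hb hs₂ _ _ _ hq₂.ne]
      simp [Nat.add_mul_mod_self_right, Nat.mod_eq_of_lt hu]
    · rw [Set.mem_singleton_iff] at hw
      subst hw
      exact ⟨(⟨u₁, hu₁⟩, ⟨q₁, hq₁⟩, ⟨p₂ - 1, by omega⟩),
        pureRight_erasureWeight_of_eq hb _ _ _ rfl⟩
  · rintro ⟨⟨u₁, q₁, q₂⟩, rfl⟩
    refine ⟨u₁, u₁.isLt, q₁, q₁.isLt, ?_⟩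
    by_cases h : (q₂ : ℕ) = p₂ - 1
    · exact ⟨_, Or.inr rfl, pureRight_erasureWeight_of_eq hb u₁ q₁ q₂ h⟩
    · refine ⟨_, Or.inl ⟨q₂ % s₂, Nat.mod_lt _ hs₂, q₂ / s₂,
        Nat.div_lt_div_of_lt_of_dvd hd₂ (by omega), ?_⟩,
        pureRight_erasureWeight_of_ne hb hs₂ u₁ q₁ q₂ h⟩
      rw [Nat.mod_add_div']

end TwoErasure

theorem stmt12_general (F K : Type*) [Field F] [Field K] [Algebra F K]
    (s₁ s₂ s p₁ p₂ : ℕ)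
    (hs : s = s₁ * s₂)
    (hd₁ : s₁ ∣ p₁ - 1) (hd₂ : s₂ ∣ p₂ - 1)
    (β α₁ α₂ : K)
    (b : Module.Basis (Fin s × Fin p₁ × Fin p₂) F K)
    (hb : ∀ x, b x = β ^ (x.1 : ℕ) * α₁ ^ (x.2.1 : ℕ) * α₂ ^ (x.2.2 : ℕ))
    (W₁ W₂ S₁ S₂ : Set K)
    (hW₁ : W₁ = {x | ∃ u < s₁, ∃ q < (p₁ - 1) / s₁, x = β ^ u * α₁ ^ (u + q * s₁)} ∪
        {α₁ ^ (p₁ - 1) * ∑ u ∈ Finset.range s₁, β ^ u})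
    (hW₂ : W₂ = {x | ∃ u < s₂, ∃ q < (p₂ - 1) / s₂, x = β ^ (u * s₁) * α₂ ^ (u + q * s₂)} ∪
        {α₂ ^ (p₂ - 1) * ∑ u ∈ Finset.range s₂, β ^ (u * s₁)})
    (hS₁ : S₁ = {x | ∃ u₂ < s₂, ∃ q₂ < p₂, ∃ w ∈ W₁, x = β ^ (u₂ * s₁) * α₂ ^ q₂ * w})
    (hS₂ : S₂ = {x | ∃ u₁ < s₁, ∃ q₁ < p₁, ∃ w ∈ W₂, x = β ^ u₁ * α₁ ^ q₁ * w}) :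
    Module.finrank F ↥(Submodule.span F S₁ ⊓ Submodule.span F S₂) = p₁ * p₂ := by
  obtain rfl : s = s₂ * s₁ := hs.trans (Nat.mul_comm _ _)
  obtain ⟨u, q₁, q₂⟩ := b.index_nonempty.some
  have hs₁ : 0 < s₁ := Nat.pos_of_mul_pos_left u.pos
  have hs₂ : 0 < s₂ := Nat.pos_of_mul_pos_right u.pos
  rw [eq_range_pureLeft_erasureWeight hb hs₁ q₁.pos hd₁ hW₁ hS₁,
    eq_range_pureRight_erasureWeight hb hs₂ q₂.pos hd₂ hW₂ hS₂,
    Module.Basis.finrank_span_pureLeft_inf_span_pureRight (fun _ => erasureWeight_ne_zero hs₁)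
      (fun _ => erasureWeight_ne_zero hs₂), Fintype.card_prod, Fintype.card_fin, Fintype.card_fin]

/-- Two-erasure intersection lemma:
`dim_F(span_F(S_{i₁}) ∩ span_F(S_{i₂})) = p₁ p₂`. -/
theorem stmt12 (F K : Type*) [Field F] [Field K] [Algebra F K]
    (k d : ℕ) (hkd : k ≤ d)
    (s₁ s₂ s p₁ p₂ : ℕ)
    (hs₁ : s₁ = d + 1 - k) (hs₂ : s₂ = d + 2 - k) (hs : s = s₁ * s₂)
    (hp₁ : p₁.Prime) (hp₂ : p₂.Prime) (hne : p₁ ≠ p₂)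
    (hd₁ : s₁ ∣ p₁ - 1) (hd₂ : s₂ ∣ p₂ - 1)
    (β α₁ α₂ : K)
    (b : Module.Basis (Fin s × Fin p₁ × Fin p₂) F K)
    (hb : ∀ x, b x = β ^ (x.1 : ℕ) * α₁ ^ (x.2.1 : ℕ) * α₂ ^ (x.2.2 : ℕ))
    (W₁ W₂ S₁ S₂ : Set K)
    (hW₁ : W₁ = {x | ∃ u < s₁, ∃ q < (p₁ - 1) / s₁, x = β ^ u * α₁ ^ (u + q * s₁)} ∪
        {α₁ ^ (p₁ - 1) * ∑ u ∈ Finset.range s₁, β ^ u})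
    (hW₂ : W₂ = {x | ∃ u < s₂, ∃ q < (p₂ - 1) / s₂, x = β ^ (u * s₁) * α₂ ^ (u + q * s₂)} ∪
        {α₂ ^ (p₂ - 1) * ∑ u ∈ Finset.range s₂, β ^ (u * s₁)})
    (hS₁ : S₁ = {x | ∃ u₂ < s₂, ∃ q₂ < p₂, ∃ w ∈ W₁, x = β ^ (u₂ * s₁) * α₂ ^ q₂ * w})
    (hS₂ : S₂ = {x | ∃ u₁ < s₁, ∃ q₁ < p₁, ∃ w ∈ W₂, x = β ^ u₁ * α₁ ^ q₁ * w}) :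
    Module.finrank F ↥(Submodule.span F S₁ ⊓ Submodule.span F S₂) = p₁ * p₂ :=
  stmt12_general F K s₁ s₂ s p₁ p₂ hs hd₁ hd₂ β α₁ α₂ b hb W₁ W₂ S₁ S₂ hW₁ hW₂ hS₁ hS₂
end
end
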